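/- arXiv:1912.01995 — 3 statements merged into one kernel-verified Lean document; each statement's English description precedes it below -/
import Mathlib

section
/- The function g(S) = log₂(∑_{i=1}^N pᵢβ/(H² + Sᵢ) + σ²), where pᵢ, β, H, σ² > 0 and Sᵢ ≥ 0, is convex and nonincreasing in each coordinate Sᵢ on the nonnegative orthant. -/
/-!
Each summand `pᵢβ / (H² + Sᵢ)`, and the constant `σ²`, is log-convex on the orthant: its
logarithm is a constant minus the logarithm of an affine function. A finite sum of log-convex
functions is log-convex, since by Hölder's inequality with exponents `1/a`, `1/b`,
`∑ uᵢ^a vᵢ^b ≤ (∑ uᵢ)^a (∑ vᵢ)^b`. Monotonicity holds termwise.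
-/

open Real Finset

theorem Real.sum_rpow_mul_rpow_le_of_add_eq_one {ι : Type*} (s : Finset ι) {u v : ι → ℝ}
    (hu : ∀ i ∈ s, 0 ≤ u i) (hv : ∀ i ∈ s, 0 ≤ v i) {a b : ℝ} (ha : 0 < a) (hb : 0 < b)
    (hab : a + b = 1) :
    ∑ i ∈ s, u i ^ a * v i ^ b ≤ (∑ i ∈ s, u i) ^ a * (∑ i ∈ s, v i) ^ b := by
  have holder := inner_le_Lp_mul_Lq_of_nonneg s (f := fun i => u i ^ a) (g := fun i => v i ^ b)
    (.inv_inv ha hb hab) (fun i hi => rpow_nonneg (hu i hi) a) (fun i hi => rpow_nonneg (hv i hi) b)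
  have hu' : ∀ i ∈ s, (u i ^ a) ^ a⁻¹ = u i := fun i hi => rpow_rpow_inv (hu i hi) ha.ne'
  have hv' : ∀ i ∈ s, (v i ^ b) ^ b⁻¹ = v i := fun i hi => rpow_rpow_inv (hv i hi) hb.ne'
  simpa only [sum_congr rfl hu', sum_congr rfl hv', one_div, inv_inv] using holder

theorem Real.log_rpow_mul_rpow {x y : ℝ} (hx : 0 < x) (hy : 0 < y) (a b : ℝ) :
    log (x ^ a * y ^ b) = a * log x + b * log y := by
  rw [log_mul (rpow_pos_of_pos hx a).ne' (rpow_pos_of_pos hy b).ne', log_rpow hx, log_rpow hy]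

theorem ConvexOn.log_sum {ι E : Type*} [AddCommGroup E] [Module ℝ E] {s : Set E} {t : Finset ι}
    {f : ι → E → ℝ} (ht : t.Nonempty) (hf_pos : ∀ i ∈ t, ∀ x ∈ s, 0 < f i x)
    (hf : ∀ i ∈ t, ConvexOn ℝ s fun x => log (f i x)) :
    ConvexOn ℝ s fun x => log (∑ i ∈ t, f i x) := by
  obtain ⟨i₀, hi₀⟩ := ht
  have hs : Convex ℝ s := (hf i₀ hi₀).1
  have hsum_pos : ∀ x ∈ s, 0 < ∑ i ∈ t, f i x := fun x hx =>
    sum_pos (fun i hi => hf_pos i hi x hx) ⟨i₀, hi₀⟩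
  refine convexOn_iff_forall_pos.2 ⟨hs, fun x hx y hy a b ha hb hab => ?_⟩
  have hxy : a • x + b • y ∈ s := hs hx hy ha.le hb.le hab
  have hpoint : ∀ i ∈ t, f i (a • x + b • y) ≤ f i x ^ a * f i y ^ b := fun i hi => by
    rw [← log_le_log_iff (hf_pos i hi _ hxy)
      (mul_pos (rpow_pos_of_pos (hf_pos i hi x hx) a) (rpow_pos_of_pos (hf_pos i hi y hy) b)),
      log_rpow_mul_rpow (hf_pos i hi x hx) (hf_pos i hi y hy)]
    exact (hf i hi).2 hx hy ha.le hb.le hab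
  calc log (∑ i ∈ t, f i (a • x + b • y))
      ≤ log (∑ i ∈ t, f i x ^ a * f i y ^ b) := log_le_log (hsum_pos _ hxy) (sum_le_sum hpoint)
    _ ≤ log ((∑ i ∈ t, f i x) ^ a * (∑ i ∈ t, f i y) ^ b) :=
        log_le_log ((hsum_pos _ hxy).trans_le (sum_le_sum hpoint))
          (sum_rpow_mul_rpow_le_of_add_eq_one t (fun i hi => (hf_pos i hi x hx).le)
            (fun i hi => (hf_pos i hi y hy).le) ha hb hab)
    _ = a • log (∑ i ∈ t, f i x) + b • log (∑ i ∈ t, f i y) :=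
        log_rpow_mul_rpow (hsum_pos x hx) (hsum_pos y hy) a b

theorem convexOn_log_div_add {c d : ℝ} (hc : 0 < c) (hd : 0 < d) :
    ConvexOn ℝ (Set.Ici 0) fun s => log (c / (d + s)) := by
  have hneg_log : ConvexOn ℝ ((fun s => d + s) ⁻¹' Set.Ioi 0) fun s => -log (d + s) :=
    strictConcaveOn_log_Ioi.concaveOn.neg.translate_right d
  have hIci : ConvexOn ℝ (Set.Ici 0) fun s => -log (d + s) :=
    hneg_log.subset (fun s (hs : 0 ≤ s) => show 0 < d + s by linarith) (convex_Ici 0)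
  refine (hIci.add_const (log c)).congr fun s (hs : 0 ≤ s) => ?_
  show -log (d + s) + log c = log (c / (d + s))
  rw [log_div hc.ne' (by linarith)]
  ring

theorem convexOn_log_sum_div_add_add {ι : Type*} [Fintype ι] {c : ι → ℝ} {d e : ℝ}
    (hc : ∀ i, 0 < c i) (hd : 0 < d) (he : 0 < e) :
    ConvexOn ℝ {S : ι → ℝ | ∀ i, 0 ≤ S i} fun S => log (∑ i, c i / (d + S i) + e) := by
  have horthant : Convex ℝ {S : ι → ℝ | ∀ i, 0 ≤ S i} := convex_Ici 0
  -- `e` becomes the `none` term, so that the argument of the logarithm is a single sum.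
  let f : Option ι → (ι → ℝ) → ℝ := fun o S => o.elim e fun i => c i / (d + S i)
  have hf_pos : ∀ o ∈ univ, ∀ S ∈ {S : ι → ℝ | ∀ i, 0 ≤ S i}, 0 < f o S := by
    rintro (_ | i) - S hS
    · exact he
    · exact div_pos (hc i) (add_pos_of_pos_of_nonneg hd (hS i))
  have hf : ∀ o ∈ univ, ConvexOn ℝ {S : ι → ℝ | ∀ i, 0 ≤ S i} fun S => log (f o S) := by
    rintro (_ | i) -
    · exact convexOn_const (log e) horthant
    · exact ((convexOn_log_div_add (hc i) hd).comp_linearMap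
        (LinearMap.proj i : (ι → ℝ) →ₗ[ℝ] ℝ)).subset (fun _ hS => hS i) horthant
  refine (ConvexOn.log_sum univ_nonempty hf_pos hf).congr fun S _ => ?_
  simp only [Fintype.sum_option, f, Option.elim, add_comm e]

/-- `g S = log₂(∑ pᵢ β/(H² + Sᵢ) + σ²)` is jointly convex and nonincreasing in each
coordinate on the nonnegative orthant. -/
theorem stmt_5 (N : ℕ) (p : Fin N → ℝ) (β H σ2 : ℝ)
    (hp : ∀ i, 0 < p i) (hβ : 0 < β) (hH : 0 < H) (hσ : 0 < σ2) :
    ConvexOn ℝ {S : Fin N → ℝ | ∀ i, 0 ≤ S i}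
      (fun S => Real.logb 2 (∑ i, p i * β / (H ^ 2 + S i) + σ2)) ∧
    (∀ S T : Fin N → ℝ, (∀ i, 0 ≤ S i) → (∀ i, 0 ≤ T i) → (∀ i, S i ≤ T i) →
      Real.logb 2 (∑ i, p i * β / (H ^ 2 + T i) + σ2) ≤
        Real.logb 2 (∑ i, p i * β / (H ^ 2 + S i) + σ2)) := by
  have hc : ∀ i, 0 < p i * β := fun i => mul_pos (hp i) hβ
  have hd : 0 < H ^ 2 := pow_pos hH 2
  refine ⟨?_, fun S T hS hT hST => ?_⟩
  · refine ((convexOn_log_sum_div_add_add hc hd hσ).smul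
      (inv_nonneg.2 (log_nonneg one_le_two))).congr fun S _ => ?_
    simp only [smul_eq_mul, logb, div_eq_inv_mul (log _)]
  · refine logb_le_logb_of_le one_lt_two ?_ ?_
    · exact add_pos_of_nonneg_of_pos (sum_nonneg fun i _ =>
        (div_pos (hc i) (add_pos_of_pos_of_nonneg hd (hT i))).le) hσ
    · gcongr with i
      · exact (hc i).le
      · exact add_pos_of_pos_of_nonneg hd (hS i)
      · exact hST i
end

section
/- For positive constants pᵢ, β, H and nonnegative reals dᵢ, dᵢ⁰, the inequality log₂(∑ᵢ pᵢβ/(H² + dᵢ)) ≥ log₂(∑ᵢ pᵢβ/(H² + dᵢ⁰)) − ∑ᵢ [pᵢβ/(H² + dᵢ⁰)² · log₂ e / (∑ⱼ pⱼβ/(H² + dⱼ⁰))] · (dᵢ − dᵢ⁰) holds; i.e., the first-order Taylor expansion of the convex function d ↦ log₂(∑ᵢ pᵢβ/(H² + dᵢ)) at d⁰ is a global under-estimator. -/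
/-!
Write `S(d) = ∑ᵢ wᵢ / (H² + dᵢ)` with `wᵢ = pᵢβ`. The linear term of the expansion at `d⁰` equals
`C / S(d⁰) - 1` with `C = ∑ᵢ wᵢ (H² + dᵢ) / (H² + dᵢ⁰)²`, so by `log t ≤ t - 1` applied to
`t = S(d⁰) / S(d)` it suffices that `S(d⁰)² ≤ S(d) C`. This is Cauchy–Schwarz in Sedrakyan's form
for the terms `wᵢ / (H² + dᵢ⁰)` against the weights `wᵢ / (H² + dᵢ)`.
-/

open Real Finset

variable {ι : Type*} [Fintype ι] {w x y : ι → ℝ}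

theorem sq_sum_div_div_sum_div_le_sum_mul_div_sq (hw : ∀ i, 0 < w i) (hx : ∀ i, 0 < x i) :
    (∑ i, w i / y i) ^ 2 / ∑ i, w i / x i ≤ ∑ i, w i * x i / y i ^ 2 := by
  refine (sq_sum_div_le_sum_sq_div univ _ fun i _ => div_pos (hw i) (hx i)).trans_eq ?_
  refine sum_congr rfl fun i _ => ?_
  have := (hw i).ne'
  have := (hx i).ne'
  by_cases hyi : y i = 0
  · simp [hyi]
  field_simp

theorem log_sum_div_sub_sum_le (hw : ∀ i, 0 < w i) (hx : ∀ i, 0 < x i) (hy : ∀ i, 0 < y i) :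
    log (∑ i, w i / y i) - ∑ i, w i / y i ^ 2 / (∑ j, w j / y j) * (x i - y i) ≤
      log (∑ i, w i / x i) := by
  cases isEmpty_or_nonempty ι
  · simp
  set S := ∑ i, w i / x i
  set S0 := ∑ i, w i / y i
  set C := ∑ i, w i * x i / y i ^ 2
  have hS : 0 < S := sum_pos (fun i _ => div_pos (hw i) (hx i)) univ_nonempty
  have hS0 : 0 < S0 := sum_pos (fun i _ => div_pos (hw i) (hy i)) univ_nonempty
  have hlinear : ∑ i, w i / y i ^ 2 / S0 * (x i - y i) = C / S0 - 1 := by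
    rw [← div_self hS0.ne', ← sub_div, ← sum_sub_distrib, sum_div]
    refine sum_congr rfl fun i _ => ?_
    have := (hy i).ne'
    field_simp
  have hratio : S0 / S ≤ C / S0 := by
    rw [div_le_div_iff₀ hS hS0, ← sq, ← div_le_iff₀ hS]
    exact sq_sum_div_div_sum_div_le_sum_mul_div_sq hw hx
  have hlog := log_le_sub_one_of_pos (div_pos hS0 hS)
  rw [log_div hS0.ne' hS.ne'] at hlog
  rw [hlinear]
  linarith

theorem logb_sum_div_sub_sum_le {b : ℝ} (hb : 1 < b) (hw : ∀ i, 0 < w i) (hx : ∀ i, 0 < x i)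
    (hy : ∀ i, 0 < y i) :
    logb b (∑ i, w i / y i) -
        ∑ i, (w i / y i ^ 2 * logb b (exp 1) / (∑ j, w j / y j)) * (x i - y i) ≤
      logb b (∑ i, w i / x i) := by
  have hlogb : 0 < log b := log_pos hb
  have hterm : ∀ i, w i / y i ^ 2 * logb b (exp 1) / (∑ j, w j / y j) * (x i - y i) =
      w i / y i ^ 2 / (∑ j, w j / y j) * (x i - y i) / log b := by
    intro i
    rw [logb, log_exp]
    ring
  rw [sum_congr rfl fun i _ => hterm i, ← sum_div, logb, logb, div_sub_div_same]
  exact div_le_div_of_nonneg_right (log_sum_div_sub_sum_le hw hx hy) hlogb.le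

/-- First-order Taylor under-estimator of the convex function
`d ↦ log₂(∑ pᵢβ/(H² + dᵢ))` at `d⁰`. -/
theorem stmt_6 (N : ℕ) (p : Fin N → ℝ) (β H : ℝ)
    (hp : ∀ i, 0 < p i) (hβ : 0 < β) (hH : 0 < H)
    (d d0 : Fin N → ℝ) (hd : ∀ i, 0 ≤ d i) (hd0 : ∀ i, 0 ≤ d0 i) :
    Real.logb 2 (∑ i, p i * β / (H ^ 2 + d0 i)) -
      ∑ i, (p i * β / (H ^ 2 + d0 i) ^ 2 * Real.logb 2 (Real.exp 1) /
        (∑ j, p j * β / (H ^ 2 + d0 j))) * (d i - d0 i) ≤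
    Real.logb 2 (∑ i, p i * β / (H ^ 2 + d i)) := by
  have key := logb_sum_div_sub_sum_le one_lt_two (w := fun i => p i * β)
    (x := fun i => H ^ 2 + d i) (y := fun i => H ^ 2 + d0 i) (fun i => mul_pos (hp i) hβ)
    (fun i => add_pos_of_pos_of_nonneg (pow_pos hH 2) (hd i))
    (fun i => add_pos_of_pos_of_nonneg (pow_pos hH 2) (hd0 i))
  simpa only [add_sub_add_left_eq_sub] using key
end

section
/- (Dinkelbach characterization) Let F be a nonempty compact set, N : F → ℝ continuous, D : F → ℝ continuous with D(x) > 0 for all x ∈ F, and let ζ* = max_{x ∈ F} N(x)/D(x). Then a point x* ∈ F attains ζ* = N(x*)/D(x*) if and only if x* maximizes N(x) − ζ*·D(x) over F and the maximum value max_{x ∈ F} (N(x) − ζ*·D(x)) equals 0. -/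
theorem sub_mul_nonpos_of_mem_upperBounds_div {X : Type*} {F : Set X} {N D : X → ℝ}
    (hD : ∀ x ∈ F, 0 < D x) {ζ : ℝ} (hζ : ζ ∈ upperBounds ((fun x => N x / D x) '' F)) :
    ∀ x ∈ F, N x - ζ * D x ≤ 0 := fun x hx => by
  have := (div_le_iff₀ (hD x hx)).mp (hζ ⟨x, hx, rfl⟩)
  linarith

theorem div_eq_iff_sub_mul_eq_zero {n d ζ : ℝ} (hd : d ≠ 0) : n / d = ζ ↔ n - ζ * d = 0 :=
  (div_eq_iff hd).trans sub_eq_zero.symm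

theorem stmt_9_general {X : Type*} (F : Set X)
    (Nf Df : X → ℝ)
    (hDpos : ∀ x ∈ F, 0 < Df x)
    (ζstar : ℝ) (hζ : IsGreatest ((fun x => Nf x / Df x) '' F) ζstar)
    (xstar : X) (hx : xstar ∈ F) :
    Nf xstar / Df xstar = ζstar ↔
      ((∀ x ∈ F, Nf x - ζstar * Df x ≤ Nf xstar - ζstar * Df xstar) ∧
        Nf xstar - ζstar * Df xstar = 0) := by
  have hle := sub_mul_nonpos_of_mem_upperBounds_div hDpos hζ.2
  rw [div_eq_iff_sub_mul_eq_zero (hDpos xstar hx).ne']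
  exact ⟨fun h0 => ⟨fun x hxF => h0 ▸ hle x hxF, h0⟩, And.right⟩

/-- Dinkelbach characterization: `x* ∈ F` attains the maximum ratio `ζ* = N/D`
iff it maximizes `N − ζ*·D` over `F` with maximum value `0`. -/
theorem stmt_9 {X : Type*} [TopologicalSpace X] (F : Set X)
    (hFne : F.Nonempty) (hFc : IsCompact F)
    (Nf Df : X → ℝ) (hN : ContinuousOn Nf F) (hD : ContinuousOn Df F)
    (hDpos : ∀ x ∈ F, 0 < Df x)
    (ζstar : ℝ) (hζ : IsGreatest ((fun x => Nf x / Df x) '' F) ζstar)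
    (xstar : X) (hx : xstar ∈ F) :
    Nf xstar / Df xstar = ζstar ↔
      ((∀ x ∈ F, Nf x - ζstar * Df x ≤ Nf xstar - ζstar * Df xstar) ∧
        Nf xstar - ζstar * Df xstar = 0) :=
  stmt_9_general F Nf Df hDpos ζstar hζ xstar hx
end
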